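/- arXiv:2409.03189 — 4 statements merged into one kernel-verified Lean document; each statement's English description precedes it below -/
import Mathlib

section
/- Let n≥3 be odd and u ∈ F_{3^n}\F_3 with χ(u+1)≠χ(u-1). With g₂(z)=z(z-1-u), g₃(z)=z(z-1+u), g₄(z)=z²-z+u², we have ∑_{z∈F_{3^n}} χ(g₂(z)g₃(z)g₄(z)) = -2. -/
/-!
Write `χ` for the quadratic character and `q(z) = (z² - u²)(z² - z + u²)`. Since `z ↦ u² / z`
satisfies `z⁴ q(u²/z) = -u⁴ q(z)` and `χ(-1) = -1` (the field has `3ⁿ ≡ 3 mod 4` elements),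
it pairs off the nonzero terms of `∑ χ(q(z))` with opposite signs, so this sum is `χ(q(0)) = -1`.
The polynomial of the theorem is `z² q(1 - z)`, so its character sum is the sum of `χ(q(1 - z))`
over `z ≠ 0`, that is `-1 - χ(q(1)) = -1 - χ(1 - u²)`, and `χ(1 - u²) = -χ(u + 1) χ(u - 1) = 1`.
-/

open Finset

lemma Nat.three_pow_mod_four_of_odd {n : ℕ} (hn : Odd n) : 3 ^ n % 4 = 3 := by
  obtain ⟨k, rfl⟩ := hn
  rw [pow_succ, pow_mul, Nat.mul_mod, Nat.pow_mod]
  norm_num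

section QuadraticChar

variable {F : Type*} [Field F] [Fintype F] [DecidableEq F]

lemma quadraticChar_neg_one_of_card_mod_four (hF : Fintype.card F % 4 = 3) :
    quadraticChar F (-1) = -1 :=
  quadraticChar_neg_one_iff_not_isSquare.mpr fun h => FiniteField.isSquare_neg_one_iff.mp h hF

lemma quadraticChar_mul_eq_neg_one_of_ne {a b : F} (ha : a ≠ 0) (hb : b ≠ 0)
    (hab : quadraticChar F a ≠ quadraticChar F b) : quadraticChar F (a * b) = -1 := by
  rw [map_mul]
  rcases quadraticChar_dichotomy ha with h | h <;> rcases quadraticChar_dichotomy hb with h' | h' <;>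
    simp_all

omit [DecidableEq F] in
lemma Fintype.sum_eq_apply_zero_of_apply_div {c : F} (hc : c ≠ 0) (f : F → ℤ)
    (hf : ∀ z ≠ 0, f (c / z) = -f z) : ∑ z, f z = f 0 := by
  classical
  let σ : Equiv.Perm F := Function.Involutive.toPerm (c / ·) fun z => div_div_cancel₀ hc
  have hσ : ∀ z, σ z = c / z := fun _ => rfl
  have hpair : ∀ z, f (σ z) + f z = if z = 0 then 2 * f 0 else 0 := by
    intro z
    split_ifs with hz
    · rw [hσ, hz, div_zero, two_mul]
    · rw [hσ, hf z hz, neg_add_cancel]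
  have hsum : ∑ z, f (σ z) = ∑ z, f z := Equiv.sum_comp σ f
  have : ∑ z, (f (σ z) + f z) = 2 * f 0 := by simp_rw [hpair, sum_ite_eq']
  rw [sum_add_distrib, hsum] at this
  linarith

lemma sum_quadraticChar_sq_mul (g : F → F) :
    ∑ z, quadraticChar F (z ^ 2 * g z) = ∑ z, quadraticChar F (g z) - quadraticChar F (g 0) := by
  have hterm : ∀ z, quadraticChar F (z ^ 2 * g z) =
      quadraticChar F (g z) - if z = 0 then quadraticChar F (g 0) else 0 := by
    intro z
    split_ifs with hz
    · simp [hz]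
    · rw [map_mul, quadraticChar_sq_one' hz, one_mul, sub_zero]
  simp_rw [hterm, sum_sub_distrib, sum_ite_eq', mem_univ, if_true]

variable (hF : quadraticChar F (-1) = -1) {u : F} (hu : u ≠ 0)
include hF hu

lemma quadraticChar_quartic_div (z : F) (hz : z ≠ 0) :
    quadraticChar F (((u ^ 2 / z) ^ 2 - u ^ 2) * ((u ^ 2 / z) ^ 2 - u ^ 2 / z + u ^ 2)) =
      -quadraticChar F ((z ^ 2 - u ^ 2) * (z ^ 2 - z + u ^ 2)) := by
  have hid : ((u ^ 2 / z) ^ 2 - u ^ 2) * ((u ^ 2 / z) ^ 2 - u ^ 2 / z + u ^ 2) =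
      -1 * (u ^ 2 / z ^ 2) ^ 2 * ((z ^ 2 - u ^ 2) * (z ^ 2 - z + u ^ 2)) := by
    field_simp
    ring
  rw [hid, map_mul, map_mul, hF, quadraticChar_sq_one' (div_ne_zero (pow_ne_zero 2 hu)
    (pow_ne_zero 2 hz))]
  ring

lemma sum_quadraticChar_quartic :
    ∑ z : F, quadraticChar F ((z ^ 2 - u ^ 2) * (z ^ 2 - z + u ^ 2)) = -1 := by
  rw [Fintype.sum_eq_apply_zero_of_apply_div (pow_ne_zero 2 hu) _
    (quadraticChar_quartic_div hF hu)]
  rw [show ((0 : F) ^ 2 - u ^ 2) * (0 ^ 2 - 0 + u ^ 2) = -1 * (u ^ 2) ^ 2 by ring, map_mul, hF,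
    quadraticChar_sq_one' (pow_ne_zero 2 hu), mul_one]

lemma sum_quadraticChar_sextic (h1u : quadraticChar F (1 - u ^ 2) = 1) :
    ∑ z : F, quadraticChar F ((z * (z - 1 - u)) * (z * (z - 1 + u)) * (z ^ 2 - z + u ^ 2)) =
      -2 := by
  let q : F → F := fun z => (z ^ 2 - u ^ 2) * (z ^ 2 - z + u ^ 2)
  have hfactor : ∀ z : F, (z * (z - 1 - u)) * (z * (z - 1 + u)) * (z ^ 2 - z + u ^ 2) =
      z ^ 2 * q (1 - z) := fun z => by ring
  have hshift : ∑ z, quadraticChar F (q (1 - z)) = ∑ z, quadraticChar F (q z) :=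
    Equiv.sum_comp (Equiv.subLeft 1) (fun z => quadraticChar F (q z))
  have hq1 : q (1 - 0) = (1 - u ^ 2) * u ^ 2 := by ring
  simp_rw [hfactor]
  rw [sum_quadraticChar_sq_mul, hshift, sum_quadraticChar_quartic hF hu, hq1, map_mul, h1u,
    quadraticChar_sq_one' hu]
  norm_num

end QuadraticChar

theorem stmt_8_general (n : ℕ) (hodd : Odd n)
    (F : Type*) [Field F] [Fintype F] [DecidableEq F]
    (hcard : Fintype.card F = 3 ^ n)
    (u : F) (hu : u ^ 3 ≠ u)
    (huu : quadraticChar F (u + 1) ≠ quadraticChar F (u - 1)) :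
    (∑ z : F, quadraticChar F
        ((z * (z - 1 - u)) * (z * (z - 1 + u)) * (z ^ 2 - z + u ^ 2))) = -2 := by
  have hF : quadraticChar F (-1) = -1 :=
    quadraticChar_neg_one_of_card_mod_four (hcard ▸ Nat.three_pow_mod_four_of_odd hodd)
  have hu0 : u ≠ 0 := fun h => hu (by simp [h])
  have hu1 : u + 1 ≠ 0 := fun h => hu (by rw [eq_neg_of_add_eq_zero_left h]; ring)
  have hu1' : u - 1 ≠ 0 := fun h => hu (by rw [sub_eq_zero.mp h]; ring)
  have h1u : quadraticChar F (1 - u ^ 2) = 1 := by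
    rw [show 1 - u ^ 2 = -1 * ((u + 1) * (u - 1)) by ring, map_mul, hF,
      quadraticChar_mul_eq_neg_one_of_ne hu1 hu1' huu]
    norm_num
  exact sum_quadraticChar_sextic hF hu0 h1u

theorem stmt_8 (n : ℕ) (hn : 3 ≤ n) (hodd : Odd n)
    (F : Type*) [Field F] [Fintype F] [DecidableEq F]
    (hcard : Fintype.card F = 3 ^ n)
    (u : F) (hu : u ^ 3 ≠ u)
    (huu : quadraticChar F (u + 1) ≠ quadraticChar F (u - 1)) :
    (∑ z : F, quadraticChar F
        ((z * (z - 1 - u)) * (z * (z - 1 + u)) * (z ^ 2 - z + u ^ 2))) = -2 :=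
  stmt_8_general n hodd F hcard u hu huu
end

section
/- Let n≥3 be odd and u ∈ F_{3^n}\F_3 with χ(u+1)≠χ(u-1). With g₁(z)=-(u+1)z, g₂(z)=z(z-1-u), g₃(z)=z(z-1+u), g₄(z)=z²-z+u², we have ∑_{z∈F_{3^n}} χ(g₁(z)g₄(z)) + ∑_{z∈F_{3^n}} χ(g₁(z)g₂(z)g₃(z)) = 0. -/
open Finset

lemma isog {F : Type*} [Field F] [Fintype F] [DecidableEq F] (hF : ringChar F ≠ 2)
    (h3 : (3:F) = 0) (a b : F) (hb : b ≠ 0) :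
    ∑ z : F, quadraticChar F (z*(z^2+a*z+b))
      = ∑ w : F, quadraticChar F ((w+a)*(w^2-b)) := by
  set χ := quadraticChar F with hχ
  calc ∑ z : F, χ (z*(z^2+a*z+b))
      = ∑ z ∈ univ.erase 0, χ (z*(z^2+a*z+b)) := by
        rw [← Finset.add_sum_erase _ _ (Finset.mem_univ (0:F))]
        simp [hχ]
    _ = ∑ w : F, ∑ z ∈ (univ.erase 0).filter (fun z => z + b*z⁻¹ = w),
          χ (z*(z^2+a*z+b)) := (Finset.sum_fiberwise _ _ _).symm
    _ = ∑ w : F, (χ (w^2-b) + 1) * χ (w+a) := by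
        refine Finset.sum_congr rfl fun w _ => ?_
        have hA : ∀ z : F, z ∈ (univ.erase 0).filter (fun z => z + b*z⁻¹ = w) ↔
            (z + w)^2 = w^2 - b := by
          intro z
          simp only [mem_filter, mem_erase, mem_univ, and_true, true_and]
          constructor
          · rintro ⟨hz0, hzw⟩
            have h' : z + b*z⁻¹ = w := hzw
            field_simp at h'
            linear_combination h' + z*w*h3
          · intro h
            have hz0 : z ≠ 0 := by
              intro hz
              rw [hz] at h
              exact hb (by linear_combination h)
            refine ⟨hz0, ?_⟩
            field_simp
            linear_combination h - z*w*h3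
        have hcongr : ∀ z ∈ (univ.erase 0).filter (fun z => z + b*z⁻¹ = w),
            χ (z*(z^2+a*z+b)) = χ (w+a) := by
          intro z hz
          have h := (hA z).mp hz
          simp only [mem_filter, mem_erase, mem_univ, and_true, true_and] at hz
          obtain ⟨hz0, hzw⟩ := hz
          have he : z*(z^2+a*z+b) = z^2 * (w+a) := by
            have h' : z + b*z⁻¹ = w := hzw
            field_simp at h'
            linear_combination z*h'
          rw [he, map_mul, quadraticChar_sq_one' hz0, one_mul]
        rw [Finset.sum_congr rfl hcongr, Finset.sum_const, nsmul_eq_mul]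
        congr 1
        have hB : ({x : F | x^2 = w^2-b}).toFinset
            = ((univ.erase 0).filter (fun z => z + b*z⁻¹ = w)).image (fun z => z + w) := by
          ext y
          simp only [Set.mem_toFinset, Set.mem_setOf_eq, Finset.mem_image]
          constructor
          · intro hy
            exact ⟨y - w, (hA _).mpr (by rw [sub_add_cancel]; exact hy), by ring⟩
          · rintro ⟨z, hz, rfl⟩
            exact (hA z).mp hz
        have := quadraticChar_card_sqrts hF (w^2-b)
        rw [hB, Finset.card_image_of_injective _ (add_left_injective w)] at this
        rw [← this]
    _ = ∑ w : F, χ ((w+a)*(w^2-b)) + ∑ w : F, χ (w+a) := by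
        rw [← Finset.sum_add_distrib]
        refine Finset.sum_congr rfl fun w _ => ?_
        rw [map_mul, mul_comm (χ (w+a)) (χ (w^2-b))]
        ring
    _ = ∑ w : F, χ ((w+a)*(w^2-b)) := by
        have : ∑ w : F, χ (w+a) = ∑ w : F, χ w :=
          Fintype.sum_equiv (Equiv.addRight a) _ _ (fun w => rfl)
        rw [this, quadraticChar_sum_zero hF, add_zero]

theorem stmt_10 (n : ℕ) (hn : 3 ≤ n) (hodd : Odd n)
    (F : Type*) [Field F] [Fintype F] [DecidableEq F]
    (hcard : Fintype.card F = 3 ^ n)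
    (u : F) (hu : u ^ 3 ≠ u)
    (huu : quadraticChar F (u + 1) ≠ quadraticChar F (u - 1)) :
    (∑ z : F, quadraticChar F ((-(u + 1) * z) * (z ^ 2 - z + u ^ 2))) +
      (∑ z : F, quadraticChar F
        ((-(u + 1) * z) * (z * (z - 1 - u)) * (z * (z - 1 + u)))) = 0 := by
  set χ := quadraticChar F with hχ
  -- characteristic 3
  have h3 : (3 : F) = 0 := by
    have hc : ((Fintype.card F : ℕ) : F) = 0 := FiniteField.cast_card_eq_zero F
    rw [hcard] at hc
    push_cast at hc
    exact pow_eq_zero_iff (by omega) |>.mp hc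
  have hF2 : ringChar F ≠ 2 := by
    intro h
    have h2 : ((2:ℕ) : F) = 0 := by
      rw [← h]; exact ringChar.Nat.cast_ringChar
    push_cast at h2
    exact one_ne_zero (α := F) (by linear_combination h3 - h2)
  -- χ(-1) = -1
  have hm1 : χ (-1) = -1 := by
    rw [hχ, quadraticChar_neg_one_iff_not_isSquare, FiniteField.isSquare_neg_one_iff, hcard]
    simp only [ne_eq, not_not]
    obtain ⟨k, hk⟩ := hodd
    subst hk
    rw [pow_succ, pow_mul, Nat.mul_mod, Nat.pow_mod]
    norm_num
  -- nonvanishing facts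
  have hu0 : u ≠ 0 := fun h => hu (by rw [h]; ring)
  have hb1 : u ^ 2 ≠ 0 := pow_ne_zero 2 hu0
  have hb2 : (1 : F) - u ^ 2 ≠ 0 := fun h => hu (by linear_combination -u * h)
  -- pointwise rewrites of the two summands
  have e1 : ∀ z : F, χ ((-(u+1) * z) * (z^2 - z + u^2))
      = χ (-(u+1)) * χ (z*(z^2 + (-1)*z + u^2)) := by
    intro z
    rw [show (-(u+1) * z) * (z^2 - z + u^2)
      = (-(u+1)) * (z*(z^2 + (-1)*z + u^2)) by ring, map_mul]
  have e2 : ∀ z : F, χ ((-(u+1) * z) * (z*(z-1-u)) * (z*(z-1+u)))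
      = χ (-(u+1)) * χ (z*(z^2 + 1*z + (1 - u^2))) := by
    intro z
    have harg : (-(u+1) * z) * (z*(z-1-u)) * (z*(z-1+u))
        = z^2 * ((-(u+1)) * (z*(z^2 + 1*z + (1 - u^2)))) := by
      linear_combination (u+1)*z^4*h3
    rw [harg]
    rcases eq_or_ne z 0 with h|h
    · simp [h, hχ]
    · rw [map_mul, quadraticChar_sq_one' h, one_mul, map_mul]
  rw [Finset.sum_congr rfl (fun z _ => e1 z), Finset.sum_congr rfl (fun z _ => e2 z),
    ← Finset.mul_sum, ← Finset.mul_sum, ← mul_add]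
  -- it remains to show the two reduced sums cancel
  have hT : (∑ z : F, χ (z*(z^2 + (-1)*z + u^2)))
      + (∑ z : F, χ (z*(z^2 + 1*z + (1 - u^2)))) = 0 := by
    have hi := isog hF2 h3 1 (1 - u^2) hb2
    rw [hχ]
    rw [hi]
    have h5 : ∑ w : F, quadraticChar F ((w+1)*(w^2-(1-u^2)))
        = ∑ v : F, quadraticChar F (v*(v^2 + v + u^2)) := by
      refine (Fintype.sum_equiv (Equiv.subRight (1:F)) _ _ fun v => ?_).symm
      exact congrArg _ (by simp only [Equiv.subRight_apply]; linear_combination v^2*h3)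
    have h6 : ∑ v : F, quadraticChar F (v*(v^2 + v + u^2))
        = -∑ x : F, quadraticChar F (x*(x^2 + (-1)*x + u^2)) := by
      have key : ∀ x : F, quadraticChar F ((-x)*((-x)^2+(-x)+u^2))
          = - quadraticChar F (x*(x^2+(-1)*x+u^2)) := by
        intro x
        rw [show (-x)*((-x)^2+(-x)+u^2) = (-1) * (x*(x^2+(-1)*x+u^2)) by ring,
          map_mul, ← hχ, hm1, neg_one_mul]
      calc ∑ v : F, quadraticChar F (v*(v^2 + v + u^2))
          = ∑ x : F, quadraticChar F ((-x)*((-x)^2+(-x)+u^2)) :=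
            (Fintype.sum_equiv (Equiv.neg F) _ _ fun x => rfl).symm
        _ = ∑ x : F, -quadraticChar F (x*(x^2+(-1)*x+u^2)) :=
            Finset.sum_congr rfl fun x _ => key x
        _ = -∑ x : F, quadraticChar F (x*(x^2+(-1)*x+u^2)) := by
            rw [Finset.sum_neg_distrib]
    rw [h5, h6]
    ring
  rw [hT, mul_zero]
end

section
/- Let n≥3 be odd and u ∈ F_{3^n}\F_3 with χ(u+1)≠χ(u-1). With g₁(z)=-(u+1)z, g₂(z)=z(z-1-u), g₄(z)=z²-z+u², we have ∑_{z∈F_{3^n}} χ(g₂(z)g₄(z)) + ∑_{z∈F_{3^n}} χ(g₁(z)g₂(z)g₄(z)) = -2. -/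
/-!
After the involution `z ↦ u² / z`, the first sum becomes `R - 1` with
`R = ∑ χ((u² - (u + 1) z)(z² - z + u²))`, the `-1` coming from the point `z = 0`; cancelling
the square `z²` in the second sum turns it into `χ(-(u + 1)) T - 1`, where `T` is the character
sum of the cubic `(z - 1 - u)(z² - z + u²)`. In characteristic 3 an affine change of variables
carries `R` to `χ(1 - u)` times the character sum of a cubic whose coefficients are the cubes of
those of `T` (after a shift), and the Frobenius shows that the two cubic sums agree. Finally
`χ(-1) = -1` and `χ(u + 1) = -χ(u - 1)` give `χ(-(u + 1)) = -χ(1 - u)`, so the cubic sums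
cancel.
-/

open Finset

theorem Fintype.sum_eq_sum_sub_add_of_forall_ne {α M : Type*} [Fintype α] [DecidableEq α]
    [AddCommGroup M] {f g : α → M} (a : α) (h : ∀ x ≠ a, f x = g x) :
    ∑ x, f x = ∑ x, g x - g a + f a := by
  have herase : ∑ x ∈ univ.erase a, f x = ∑ x ∈ univ.erase a, g x :=
    Finset.sum_congr rfl fun x hx => h x (ne_of_mem_erase hx)
  rw [← add_sum_erase _ f (mem_univ a), ← add_sum_erase _ g (mem_univ a), herase]
  abel

theorem Fintype.sum_comp_div_left {G₀ M : Type*} [CommGroupWithZero G₀] [Fintype G₀]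
    [AddCommMonoid M] {c : G₀} (hc : c ≠ 0) (f : G₀ → M) : ∑ z, f (c / z) = ∑ z, f z :=
  Function.Involutive.bijective (f := (c / ·)) (fun _ => div_div_cancel₀ hc) |>.sum_comp f

section QuadraticChar

variable {F : Type*} [Field F] [Fintype F] [DecidableEq F]

theorem quadraticChar_sq_mul {a : F} (ha : a ≠ 0) (b : F) :
    quadraticChar F (a ^ 2 * b) = quadraticChar F b := by
  rw [map_mul, quadraticChar_sq_one' ha, one_mul]

theorem quadraticChar_eq_neg_of_ne {a b : F} (ha : a ≠ 0) (hb : b ≠ 0)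
    (h : quadraticChar F a ≠ quadraticChar F b) : quadraticChar F a = -quadraticChar F b := by
  rcases quadraticChar_dichotomy ha with ha' | ha' <;>
    rcases quadraticChar_dichotomy hb with hb' | hb' <;> simp_all

theorem quadraticChar_map_ringEquiv (σ : F ≃+* F) (x : F) :
    quadraticChar F (σ x) = quadraticChar F x := by
  have hsq : IsSquare (σ x) ↔ IsSquare x :=
    ⟨fun h => by simpa using h.map σ.symm, fun h => h.map σ⟩
  simp only [quadraticChar_apply, quadraticCharFun, map_eq_zero_iff σ σ.injective, hsq]

def cubicCharSum (a b : F) : ℤ :=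
  ∑ x : F, quadraticChar F (x * (x ^ 2 + a * x + b))

theorem cubicCharSum_map_ringEquiv (σ : F ≃+* F) (a b : F) :
    cubicCharSum (σ a) (σ b) = cubicCharSum a b := by
  rw [cubicCharSum, cubicCharSum,
    ← σ.bijective.sum_comp fun x => quadraticChar F (x * (x ^ 2 + σ a * x + σ b))]
  refine sum_congr rfl fun x _ => ?_
  rw [← quadraticChar_map_ringEquiv σ (x * (x ^ 2 + a * x + b))]
  simp only [map_mul, map_add, map_pow]

theorem cubicCharSum_pow_char (p : ℕ) [Fact p.Prime] [CharP F p] (a b : F) :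
    cubicCharSum (a ^ p) (b ^ p) = cubicCharSum a b := by
  simpa [frobenius_def] using cubicCharSum_map_ringEquiv (frobeniusEquiv F p) a b

variable {u : F}

theorem sum_quadraticChar_g₂_mul_g₄ (hu : u ≠ 0) :
    ∑ z : F, quadraticChar F ((z * (z - 1 - u)) * (z ^ 2 - z + u ^ 2)) =
      ∑ z : F, quadraticChar F ((u ^ 2 - (u + 1) * z) * (z ^ 2 - z + u ^ 2)) - 1 := by
  have hinv : ∀ z ≠ 0,
      quadraticChar F ((u ^ 2 / z * (u ^ 2 / z - 1 - u)) * ((u ^ 2 / z) ^ 2 - u ^ 2 / z + u ^ 2)) =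
        quadraticChar F ((u ^ 2 - (u + 1) * z) * (z ^ 2 - z + u ^ 2)) := by
    intro z hz
    refine (congrArg _ ?_).trans
      (quadraticChar_sq_mul (div_ne_zero (pow_ne_zero 2 hu) (pow_ne_zero 2 hz)) _)
    field_simp
    ring
  rw [← Fintype.sum_comp_div_left (pow_ne_zero 2 hu),
    Fintype.sum_eq_sum_sub_add_of_forall_ne 0 hinv, div_zero,
    show (u ^ 2 - (u + 1) * 0) * (0 ^ 2 - 0 + u ^ 2) = (u ^ 2) ^ 2 by ring,
    quadraticChar_sq_one' (pow_ne_zero 2 hu), zero_mul, zero_mul, quadraticChar_zero]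
  ring

theorem sum_quadraticChar_g₁_mul_g₂_mul_g₄ (hu : u ≠ 0) (hu₁ : u + 1 ≠ 0) :
    ∑ z : F, quadraticChar F ((-(u + 1) * z) * (z * (z - 1 - u)) * (z ^ 2 - z + u ^ 2)) =
      quadraticChar F (-(u + 1)) *
        ∑ z : F, quadraticChar F ((z - 1 - u) * (z ^ 2 - z + u ^ 2)) - 1 := by
  have hcancel : ∀ z ≠ 0,
      quadraticChar F ((-(u + 1) * z) * (z * (z - 1 - u)) * (z ^ 2 - z + u ^ 2)) =
        quadraticChar F (-(u + 1)) * quadraticChar F ((z - 1 - u) * (z ^ 2 - z + u ^ 2)) := by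
    intro z hz
    rw [← map_mul]
    refine (congrArg _ ?_).trans (quadraticChar_sq_mul hz _)
    ring
  rw [mul_sum, Fintype.sum_eq_sum_sub_add_of_forall_ne 0 hcancel,
    show ((0 : F) - 1 - u) * (0 ^ 2 - 0 + u ^ 2) = u ^ 2 * -(u + 1) by ring,
    quadraticChar_sq_mul hu, ← sq, quadraticChar_sq_one (neg_ne_zero.2 hu₁)]
  simp

end QuadraticChar

section CharThree

variable {F : Type*} [Field F] [Fintype F] [DecidableEq F] [CharP F 3] {u : F}

theorem sum_quadraticChar_cubic_eq_cubicCharSum :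
    ∑ z : F, quadraticChar F ((z - 1 - u) * (z ^ 2 - z + u ^ 2)) =
      cubicCharSum (1 - u) (u * (1 - u)) := by
  rw [cubicCharSum, ← Equiv.sum_comp (Equiv.addRight (1 + u))
    fun z => quadraticChar F ((z - 1 - u) * (z ^ 2 - z + u ^ 2))]
  refine sum_congr rfl fun x _ => congrArg _ ?_
  rw [Equiv.coe_addRight, ← sub_eq_zero]
  ring_nf
  reduce_mod_char!

theorem cubicCharSum_cube_eq (hu₁ : u + 1 ≠ 0) (hu₂ : 1 - u ≠ 0) :
    cubicCharSum ((1 - u) ^ 3) ((u * (1 - u)) ^ 3) =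
      quadraticChar F (1 - u) *
        ∑ z : F, quadraticChar F ((u ^ 2 - (u + 1) * z) * (z ^ 2 - z + u ^ 2)) := by
  have hc : (u + 1) * (1 - u) ≠ 0 := mul_ne_zero hu₁ hu₂
  -- `x = u²(1 - u) - (u + 1)(1 - u) z` vanishes at the root `u² / (u + 1)` of the linear factor
  have haff : Function.Bijective fun z => u ^ 2 * (1 - u) - (u + 1) * (1 - u) * z :=
    (Equiv.subLeft _).bijective.comp (mulLeft_bijective₀ _ hc)
  rw [cubicCharSum, mul_sum, ← haff.sum_comp]
  refine sum_congr rfl fun z _ => ?_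
  rw [← map_mul]
  refine (congrArg _ ?_).trans (quadraticChar_sq_mul hc _)
  rw [← sub_eq_zero]
  ring_nf
  reduce_mod_char!

end CharThree

theorem stmt_11_general (n : ℕ) (hodd : Odd n)
    (F : Type*) [Field F] [Fintype F] [DecidableEq F]
    (hcard : Fintype.card F = 3 ^ n)
    (u : F) (hu : u ^ 3 ≠ u)
    (huu : quadraticChar F (u + 1) ≠ quadraticChar F (u - 1)) :
    (∑ z : F, quadraticChar F ((z * (z - 1 - u)) * (z ^ 2 - z + u ^ 2))) +
      (∑ z : F, quadraticChar F
        ((-(u + 1) * z) * (z * (z - 1 - u)) * (z ^ 2 - z + u ^ 2))) = -2 := by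
  have : Fact (Nat.Prime 3) := ⟨Nat.prime_three⟩
  have : CharP F 3 := charP_of_card_eq_prime_pow hcard
  have hneg : quadraticChar F (-1) = -1 := by
    refine quadraticChar_neg_one_iff_not_isSquare.2 ?_
    rw [FiniteField.isSquare_neg_one_iff, hcard, not_not]
    obtain ⟨k, rfl⟩ := hodd
    rw [pow_succ, pow_mul, Nat.mul_mod, Nat.pow_mod]
    norm_num
  have hu₀ : u ≠ 0 := by rintro rfl; simp at hu
  have hu₁ : u + 1 ≠ 0 := by
    intro h; apply hu; rw [eq_neg_of_add_eq_zero_left h]; ring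
  have hu₂ : 1 - u ≠ 0 := by
    intro h; apply hu; rw [← sub_eq_zero.1 h]; ring
  have hsign : quadraticChar F (-(u + 1)) = -quadraticChar F (1 - u) := by
    rw [show -(u + 1) = -1 * (u + 1) by ring, show 1 - u = -1 * (u - 1) by ring,
      map_mul, map_mul, hneg,
      quadraticChar_eq_neg_of_ne hu₁ (by rwa [← neg_sub, neg_ne_zero]) huu]
    ring
  rw [sum_quadraticChar_g₂_mul_g₄ hu₀, sum_quadraticChar_g₁_mul_g₂_mul_g₄ hu₀ hu₁,
    sum_quadraticChar_cubic_eq_cubicCharSum, ← cubicCharSum_pow_char 3,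
    cubicCharSum_cube_eq hu₁ hu₂, hsign, neg_mul, ← mul_assoc, ← sq,
    quadraticChar_sq_one hu₂]
  ring

theorem stmt_11 (n : ℕ) (hn : 3 ≤ n) (hodd : Odd n)
    (F : Type*) [Field F] [Fintype F] [DecidableEq F]
    (hcard : Fintype.card F = 3 ^ n)
    (u : F) (hu : u ^ 3 ≠ u)
    (huu : quadraticChar F (u + 1) ≠ quadraticChar F (u - 1)) :
    (∑ z : F, quadraticChar F ((z * (z - 1 - u)) * (z ^ 2 - z + u ^ 2))) +
      (∑ z : F, quadraticChar F
        ((-(u + 1) * z) * (z * (z - 1 - u)) * (z ^ 2 - z + u ^ 2))) = -2 :=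
  stmt_11_general n hodd F hcard u hu huu
end

section
/- Let n≥3 be odd, u ∈ F_{3^n}\F_3 with χ(u+1)≠χ(u-1), s²=1-u², φ=1+s. With g₁(z)=-(u+1)z, g₂(z)=z(z-1-u), g₃(z)=z(z-1+u), g₄(z)=z²-z+u², g₅(z)=-φ(z+1-s), we have ∑_{z∈F_{3^n}} χ(g₂g₃g₄g₅(z)) + ∑_{z∈F_{3^n}} χ(g₁g₂g₃g₄g₅(z)) = 2. -/
/-!
Write `G = g₂ g₃ g₄ g₅` (`gProd u s`). As `χ(c²z) = χ(z)` and `1 + χ(z)` counts the square roots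
of `z`, the two sums add up to `∑_w χ(G(-(u+1)w²))`. In characteristic 3 we have
`g₄ = (z+1+s)(z+1-s)` and `(u+1+s)² = -(u+1)(1+s)`, so at `z = -(u+1)w²`, `W = (u+1)w`, the
factors `z-1-u`, `z-1+u`, `z+1+s` of `G` become `-(W² + c²)/(u+1)` with `c = u+1, s, u+1+s`, and
the rest of `G` is a square times `-(1+s)`. Since `-1` is not a square (`3ⁿ ≡ 3 mod 4`), this
gives `χ(G(-(u+1)w²)) = -χ(H(W))` for `w ≠ 0`, where `H(W) = (W²+α²)(W²+β²)(W²+(α+β)²)`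
(`sextic α β W`) with `α = u+1`, `β = s`.
In characteristic 3, `H(W) = (W³+(α-β)²W)² + (αβ(α+β))²` and `W ↦ W³+(α-β)²W` is additive with
trivial kernel, so `∑ χ(H) = ∑_v χ(v² + c) = -1` by the Jacobi sum `J(χ, χ) = -χ(-1)`.
As `χ(H(0)) = 1`, the total is `1 - ∑ χ(H) = 2`.
-/

open Finset

section OddCharacteristic

variable {F : Type*} [Field F] [Fintype F] [DecidableEq F]

local notation "χ" => quadraticChar F

lemma quadraticChar_sq_mul_s14 {b : F} (hb : b ≠ 0) (x : F) : χ (b ^ 2 * x) = χ x := by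
  rw [map_mul, quadraticChar_sq_one' hb, one_mul]

lemma quadraticChar_neg_sq_mul (hm1 : ¬IsSquare (-1 : F)) {b : F} (hb : b ≠ 0) (x : F) :
    χ (-b ^ 2 * x) = -χ x := by
  rw [neg_mul, neg_eq_neg_one_mul, map_mul, quadraticChar_sq_mul_s14 hb,
    quadraticChar_neg_one_iff_not_isSquare.mpr hm1, neg_one_mul]

lemma sum_apply_sq_eq (hF : ringChar F ≠ 2) (f : F → ℤ) :
    ∑ w : F, f (w ^ 2) = ∑ z : F, (χ z + 1) * f z := by
  rw [← sum_fiberwise' univ (fun w : F => w ^ 2) f]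
  refine sum_congr rfl fun z _ => ?_
  rw [sum_const, nsmul_eq_mul]
  congr 1
  have h := quadraticChar_card_sqrts hF z
  rw [Set.toFinset_ofPred] at h
  exact_mod_cast h

lemma sum_quadraticChar_mul_add (hF : ringChar F ≠ 2) {c : F} (hc : c ≠ 0) :
    ∑ z : F, χ z * χ (z + c) = -1 := by
  have hJ : jacobiSum χ χ = -χ (-1) := by
    simpa only [(quadraticChar_isQuadratic F).inv] using
      jacobiSum_nontrivial_inv (quadraticChar_ne_one hF)
  have hneg : χ (-1) * χ (-1) = 1 := by
    rw [← map_mul, neg_one_mul, neg_neg, map_one]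
  calc ∑ z : F, χ z * χ (z + c) = ∑ x : F, χ (-c * x) * χ (-c * x + c) :=
        (Fintype.sum_equiv (Equiv.mulLeft₀ (-c) (neg_ne_zero.mpr hc)) _ _ fun _ => rfl).symm
    _ = ∑ x : F, χ (-1) * (χ x * χ (1 - x)) := by
        refine sum_congr rfl fun x _ => ?_
        rw [← map_mul, ← map_mul, ← map_mul, ← quadraticChar_sq_mul_s14 hc (-1 * _)]
        congr 1
        ring
    _ = -1 := by
        rw [← mul_sum, ← jacobiSum, hJ, mul_neg, hneg]

lemma sum_quadraticChar_sq_add (hF : ringChar F ≠ 2) {c : F} (hc : c ≠ 0) :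
    ∑ v : F, χ (v ^ 2 + c) = -1 := by
  have hshift : ∑ z : F, χ (z + c) = 0 := by
    rw [← quadraticChar_sum_zero hF]
    exact Fintype.sum_equiv (Equiv.addRight c) _ _ fun _ => rfl
  rw [sum_apply_sq_eq hF fun z => χ (z + c)]
  simp only [add_one_mul, sum_add_distrib, sum_quadraticChar_mul_add hF hc, hshift, add_zero]

lemma sum_quadraticChar_add_sum_quadraticChar_mul (hF : ringChar F ≠ 2) {c : F} (hc : c ≠ 0)
    (f : F → F) :
    ∑ z : F, χ (f z) + ∑ z : F, χ (c * z * f z) = ∑ w : F, χ (f (c * w ^ 2)) := by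
  rw [sum_apply_sq_eq hF fun z => χ (f (c * z)), ← sum_add_distrib]
  refine (Fintype.sum_equiv (Equiv.mulLeft₀ c hc) _ _ fun z => ?_).symm
  rw [Equiv.mulLeft₀_apply, map_mul, ← mul_assoc, ← sq, quadraticChar_sq_mul_s14 hc]
  ring

end OddCharacteristic

lemma eq_zero_of_sq_add_sq_eq_zero {F : Type*} [Field F] (hm1 : ¬IsSquare (-1 : F)) {a b : F}
    (h : a ^ 2 + b ^ 2 = 0) : a = 0 := by
  by_contra ha
  exact hm1 ⟨b / a, by field_simp; linear_combination -h⟩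

section CharacteristicThree

variable {F : Type*} [Field F] [CharP F 3]

lemma injective_cube_add_sq_mul (hm1 : ¬IsSquare (-1 : F)) (c : F) :
    Function.Injective fun x : F => x ^ 3 + c ^ 2 * x := by
  intro x y hxy
  have hfac : ((x - y) ^ 2 + c ^ 2) * (x - y) = 0 := by
    linear_combination hxy - (x - y) * x * y * CharP.cast_eq_zero F 3
  rcases mul_eq_zero.mp hfac with h | h
  · exact sub_eq_zero.mp (eq_zero_of_sq_add_sq_eq_zero hm1 h)
  · exact sub_eq_zero.mp h

def sextic (α β W : F) : F := (W ^ 2 + α ^ 2) * (W ^ 2 + β ^ 2) * (W ^ 2 + (α + β) ^ 2)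

lemma sextic_eq (α β W : F) :
    sextic α β W = (W ^ 3 + (α - β) ^ 2 * W) ^ 2 + (α * β * (α + β)) ^ 2 := by
  rw [sextic]
  linear_combination
    α * β * W ^ 2 * (2 * W ^ 2 + 2 * α ^ 2 - α * β + 2 * β ^ 2) * CharP.cast_eq_zero F 3

lemma ringChar_ne_two : ringChar F ≠ 2 := by
  rw [ringChar.eq F 3]
  decide

variable [Fintype F] [DecidableEq F]

local notation "χ" => quadraticChar F

lemma sum_quadraticChar_sextic_s14 (hm1 : ¬IsSquare (-1 : F)) {α β : F} (hα : α ≠ 0) (hβ : β ≠ 0)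
    (hαβ : α + β ≠ 0) : ∑ W : F, χ (sextic α β W) = -1 := by
  simp only [sextic_eq]
  rw [Fintype.sum_bijective _ (Finite.injective_iff_bijective.mp
    (injective_cube_add_sq_mul hm1 (α - β))) _ (fun v => χ (v ^ 2 + (α * β * (α + β)) ^ 2))
    fun _ => rfl]
  exact sum_quadraticChar_sq_add ringChar_ne_two
    (pow_ne_zero 2 (mul_ne_zero (mul_ne_zero hα hβ) hαβ))

end CharacteristicThree

section Problem

variable {F : Type*} [Field F] [CharP F 3] {u s : F}

def gProd (u s z : F) : F :=
  (z * (z - 1 - u)) * (z * (z - 1 + u)) * (z ^ 2 - z + u ^ 2) * (-(1 + s) * (z + 1 - s))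

lemma gProd_eq (hs : s ^ 2 = 1 - u ^ 2) (z : F) :
    gProd u s z =
      -(1 + s) * (z * (z + 1 - s)) ^ 2 * ((z - 1 - u) * (z - 1 + u) * (z + 1 + s)) := by
  rw [gProd]
  linear_combination (-(1 + s) * z ^ 2 * (z - 1 - u) * (z - 1 + u) * (z + 1 - s)) *
    (hs - z * CharP.cast_eq_zero F 3)

lemma add_one_add_sq (hs : s ^ 2 = 1 - u ^ 2) : (u + 1 + s) ^ 2 = -((u + 1) * (1 + s)) := by
  linear_combination hs + (u + 1) * (1 + s) * CharP.cast_eq_zero F 3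

lemma gProd_neg_mul_sq (hs : s ^ 2 = 1 - u ^ 2) (w : F) :
    (u + 1) ^ 4 * gProd u s (-(u + 1) * w ^ 2) =
      -((-(u + 1) * w ^ 2) * (-(u + 1) * w ^ 2 + 1 - s) * (u + 1 + s)) ^ 2 *
        sextic (u + 1) s ((u + 1) * w) := by
  set z := -(u + 1) * w ^ 2 with hz
  have h₁ : (u + 1) * (z - 1 - u) = -(((u + 1) * w) ^ 2 + (u + 1) ^ 2) := by rw [hz]; ring
  have h₂ : (u + 1) * (z - 1 + u) = -(((u + 1) * w) ^ 2 + s ^ 2) := by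
    rw [hz]; linear_combination hs
  have h₃ : (u + 1) * (z + 1 + s) = -(((u + 1) * w) ^ 2 + (u + 1 + s) ^ 2) := by
    rw [hz]; linear_combination add_one_add_sq hs
  calc (u + 1) ^ 4 * gProd u s z
      = (z * (z + 1 - s)) ^ 2 * (-((u + 1) * (1 + s))) *
          (((u + 1) * (z - 1 - u)) * ((u + 1) * (z - 1 + u)) * ((u + 1) * (z + 1 + s))) := by
        rw [gProd_eq hs]; ring
    _ = _ := by rw [h₁, h₂, h₃, ← add_one_add_sq hs, sextic]; ring

lemma neg_mul_sq_add_one_sub_ne_zero (hm1 : ¬IsSquare (-1 : F)) (hs : s ^ 2 = 1 - u ^ 2)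
    (hu : (u + 1) * u ≠ 0) (w : F) : -(u + 1) * w ^ 2 + 1 - s ≠ 0 := by
  intro h
  refine hu (eq_zero_of_sq_add_sq_eq_zero hm1 (b := (u + 1 + s) * (u + 1) * w) ?_)
  linear_combination -(u + 1 + s) ^ 2 * (u + 1) * h + (u + 1) * (1 - s) * add_one_add_sq hs +
    (u + 1) ^ 2 * hs

variable [Fintype F] [DecidableEq F]

local notation "χ" => quadraticChar F

lemma quadraticChar_gProd_add_quadraticChar_sextic (hm1 : ¬IsSquare (-1 : F))
    (hs : s ^ 2 = 1 - u ^ 2) (hu : (u + 1) * u ≠ 0) (hs₀ : s ≠ 0) (hd : u + 1 + s ≠ 0) (w : F) :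
    χ (gProd u s (-(u + 1) * w ^ 2)) + χ (sextic (u + 1) s ((u + 1) * w)) =
      if w = 0 then 1 else 0 := by
  have hu₁ : u + 1 ≠ 0 := left_ne_zero_of_mul hu
  split_ifs with hw
  · have hH : sextic (u + 1) s ((u + 1) * w) = ((u + 1) * s * (u + 1 + s)) ^ 2 := by
      rw [sextic, hw]; ring
    rw [hH, quadraticChar_sq_one' (mul_ne_zero (mul_ne_zero hu₁ hs₀) hd), hw, gProd]
    simp
  · have hX : -(u + 1) * w ^ 2 * (-(u + 1) * w ^ 2 + 1 - s) * (u + 1 + s) ≠ 0 :=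
      mul_ne_zero (mul_ne_zero (mul_ne_zero (neg_ne_zero.mpr hu₁) (pow_ne_zero 2 hw))
        (neg_mul_sq_add_one_sub_ne_zero hm1 hs hu w)) hd
    have h := congrArg χ (gProd_neg_mul_sq hs w)
    rw [show (u + 1) ^ 4 = ((u + 1) ^ 2) ^ 2 by ring, quadraticChar_sq_mul_s14 (pow_ne_zero 2 hu₁),
      quadraticChar_neg_sq_mul hm1 hX] at h
    rw [h]
    ring

lemma sum_quadraticChar_gProd_neg_mul_sq (hm1 : ¬IsSquare (-1 : F)) (hu : u ^ 3 ≠ u)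
    (hs : s ^ 2 = 1 - u ^ 2) : ∑ w : F, χ (gProd u s (-(u + 1) * w ^ 2)) = 2 := by
  have hu₀ : (u + 1) * u ≠ 0 := fun h => hu (by linear_combination (u - 1) * h)
  have hu₁ : u + 1 ≠ 0 := left_ne_zero_of_mul hu₀
  have hs₀ : s ≠ 0 := fun h => hu (by linear_combination u * hs - u * s * h)
  have hd : u + 1 + s ≠ 0 := fun h => hu (by
    linear_combination (u - 1) * ((u ^ 2 + u) * CharP.cast_eq_zero F 3 - (u + 1 - s) * h - hs))
  have hH : ∑ w : F, χ (sextic (u + 1) s ((u + 1) * w)) = -1 :=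
    (Fintype.sum_equiv (Equiv.mulLeft₀ _ hu₁) _ _ fun _ => rfl).trans
      (sum_quadraticChar_sextic_s14 hm1 hu₁ hs₀ hd)
  have h := Fintype.sum_congr _ _ (quadraticChar_gProd_add_quadraticChar_sextic hm1 hs hu₀ hs₀ hd)
  rw [sum_add_distrib, hH, Fintype.sum_ite_eq'] at h
  linarith

end Problem

theorem stmt_14_general (n : ℕ) (hodd : Odd n)
    (F : Type*) [Field F] [Fintype F] [DecidableEq F]
    (hcard : Fintype.card F = 3 ^ n)
    (u : F) (hu : u ^ 3 ≠ u)
    (s : F) (hs : s ^ 2 = 1 - u ^ 2) :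
    (∑ z : F, quadraticChar F
        ((z * (z - 1 - u)) * (z * (z - 1 + u)) * (z ^ 2 - z + u ^ 2) *
          (-(1 + s) * (z + 1 - s)))) +
      (∑ z : F, quadraticChar F
        ((-(u + 1) * z) * (z * (z - 1 - u)) * (z * (z - 1 + u)) *
          (z ^ 2 - z + u ^ 2) * (-(1 + s) * (z + 1 - s)))) = 2 := by
  have : CharP F 3 := charP_of_card_eq_prime_pow hcard
  have hm1 : ¬IsSquare (-1 : F) := by
    obtain ⟨k, rfl⟩ := hodd
    rw [FiniteField.isSquare_neg_one_iff, hcard, not_not, pow_succ, pow_mul, Nat.mul_mod,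
      Nat.pow_mod]
    norm_num
  have hu₁ : -(u + 1) ≠ 0 := neg_ne_zero.mpr fun h => hu (by linear_combination (u ^ 2 - u) * h)
  rw [← sum_quadraticChar_gProd_neg_mul_sq hm1 hu hs,
    ← sum_quadraticChar_add_sum_quadraticChar_mul ringChar_ne_two hu₁]
  simp only [gProd, mul_assoc]

theorem stmt_14 (n : ℕ) (hn : 3 ≤ n) (hodd : Odd n)
    (F : Type*) [Field F] [Fintype F] [DecidableEq F]
    (hcard : Fintype.card F = 3 ^ n)
    (u : F) (hu : u ^ 3 ≠ u)
    (huu : quadraticChar F (u + 1) ≠ quadraticChar F (u - 1))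
    (s : F) (hs : s ^ 2 = 1 - u ^ 2) :
    (∑ z : F, quadraticChar F
        ((z * (z - 1 - u)) * (z * (z - 1 + u)) * (z ^ 2 - z + u ^ 2) *
          (-(1 + s) * (z + 1 - s)))) +
      (∑ z : F, quadraticChar F
        ((-(u + 1) * z) * (z * (z - 1 - u)) * (z * (z - 1 + u)) *
          (z ^ 2 - z + u ^ 2) * (-(1 + s) * (z + 1 - s)))) = 2 :=
  stmt_14_general n hodd F hcard u hu s hs
end
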